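/- For any M ∈ ℕ and fixed ROSt data with ∑_α ξ_α < ∞, the random variable ln( (∑_α ξ_α e^{β√M κ_α}) / (∑_α ξ_α) ) is integrable with respect to the Gaussian measure of the variables κ_α, and its expected absolute value is bounded above by β²M/4 + β√(2M). -/

import Mathlib

/-!
Put `t = β√M`. For probability weights `p_α`, Jensen's inequality gives
`ln ∑ p_α e^{t κ_α} ≥ t ∑ p_α κ_α ≥ -t ∑ p_α |κ_α|`, and `ln y ≤ c - 1 + e^{-c} y` with
`c = t²/4 = ln 𝔼 e^{t κ_α}` bounds it from above. Both bounds are series of integrable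
functions with summable integrals, so `|ln ∑ p_α e^{t κ_α}|` is dominated by an integrable
function whose expectation is `t²/4 + 2t 𝔼|κ_α| ≤ t²/4 + 2t (𝔼κ_α²)^{1/2} = t²/4 + t√2`.
-/

open MeasureTheory ProbabilityTheory Real ENNReal

section WeightedExp

variable {ι : Type*} {w x : ι → ℝ}

theorem exp_tsum_mul_div_le_tsum_mul_exp_div (hw : ∀ i, 0 ≤ w i) (hw_sum : Summable w)
    (hS : 0 < ∑' i, w i) (hx : Summable fun i ↦ w i * x i)
    (hexp : Summable fun i ↦ w i * exp (x i)) :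
    exp ((∑' i, w i * x i) / ∑' i, w i) ≤ (∑' i, w i * exp (x i)) / ∑' i, w i := by
  set S := ∑' i, w i
  set c := (∑' i, w i * x i) / S
  -- `exp` lies above its tangent line at the weighted mean `c`
  have h_tangent (i : ι) : exp c * (w i * x i + (1 - c) * w i) ≤ w i * exp (x i) := calc
    exp c * (w i * x i + (1 - c) * w i) = w i * (exp c * (x i - c + 1)) := by ring
    _ ≤ w i * (exp c * exp (x i - c)) :=
      mul_le_mul_of_nonneg_left (mul_le_mul_of_nonneg_left (add_one_le_exp _) (exp_pos c).le)
        (hw i)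
    _ = w i * exp (x i) := by rw [← exp_add, add_sub_cancel]
  have h_sum : ∑' i, exp c * (w i * x i + (1 - c) * w i) = exp c * S := by
    rw [tsum_mul_left, hx.tsum_add (hw_sum.mul_left _), tsum_mul_left]
    have hcS : c * S = ∑' i, w i * x i := div_mul_cancel₀ _ hS.ne'
    linear_combination exp c * -hcS
  rw [le_div_iff₀ hS, ← h_sum]
  exact Summable.tsum_le_tsum h_tangent ((hx.add (hw_sum.mul_left _)).mul_left _) hexp

theorem abs_log_tsum_mul_exp_div_le (hw : ∀ i, 0 ≤ w i) (hw_sum : Summable w)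
    (hS : 0 < ∑' i, w i) (hx : Summable fun i ↦ w i * |x i|)
    (hexp : Summable fun i ↦ w i * exp (x i)) (c : ℝ) :
    |log ((∑' i, w i * exp (x i)) / ∑' i, w i)| ≤
      c - 1 + exp (-c) * ((∑' i, w i * exp (x i)) / ∑' i, w i) +
        2 * ((∑' i, w i * |x i|) / ∑' i, w i) := by
  set S := ∑' i, w i
  set A := ∑' i, w i * |x i|
  set y := (∑' i, w i * exp (x i)) / S
  have h_norm : (fun i ↦ ‖w i * x i‖) = fun i ↦ w i * |x i| := by
    ext i; rw [norm_mul, norm_of_nonneg (hw i), norm_eq_abs]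
  have hx' : Summable fun i ↦ w i * x i := (h_norm ▸ hx).of_norm
  have h_jensen := exp_tsum_mul_div_le_tsum_mul_exp_div hw hw_sum hS hx' hexp
  have hy : 0 < y := (exp_pos _).trans_le h_jensen
  have h_lower : -(A / S) ≤ log y := calc
    -(A / S) ≤ (∑' i, w i * x i) / S := by
      rw [← neg_div, div_le_div_iff_of_pos_right hS, neg_le]
      refine (neg_le_abs _).trans ?_
      have := norm_tsum_le_tsum_norm (h_norm ▸ hx)
      rwa [h_norm, norm_eq_abs] at this
    _ ≤ log y := by rw [← log_exp (_ / S)]; exact log_le_log (exp_pos _) h_jensen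
  have h_upper : log y ≤ c - 1 + exp (-c) * y := by
    have := log_le_sub_one_of_pos (mul_pos (exp_pos (-c)) hy)
    rw [log_mul (exp_pos _).ne' hy.ne', log_exp] at this
    linarith
  have hA : 0 ≤ A / S := div_nonneg (tsum_nonneg fun i ↦ mul_nonneg (hw i) (abs_nonneg _)) hS.le
  rw [abs_le]
  constructor <;> linarith

end WeightedExp

section SeriesOfIntegrable

variable {α ι E : Type*} {_ : MeasurableSpace α} {μ : Measure α}
  [NormedAddCommGroup E] {F : ι → α → E}

theorem tsum_lintegral_enorm_ne_top (hF : ∀ i, Integrable (F i) μ)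
    (hF_sum : Summable fun i ↦ ∫ a, ‖F i a‖ ∂μ) :
    ∑' i, ∫⁻ a, ‖F i a‖ₑ ∂μ ≠ ∞ := by
  simp_rw [← ofReal_integral_norm_eq_lintegral_enorm (hF _),
    ← ENNReal.ofReal_tsum_of_nonneg (fun i ↦ integral_nonneg fun _ ↦ norm_nonneg _) hF_sum]
  exact ofReal_ne_top

theorem ae_summable_norm_of_summable_integral_norm [Countable ι] (hF : ∀ i, Integrable (F i) μ)
    (hF_sum : Summable fun i ↦ ∫ a, ‖F i a‖ ∂μ) :
    ∀ᵐ a ∂μ, Summable fun i ↦ ‖F i a‖ := by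
  refine summable_norm_of_tsum_eLpNorm_ne_top le_rfl (fun i ↦ (hF i).aestronglyMeasurable) ?_
  simpa only [eLpNorm_one_eq_lintegral_enorm] using tsum_lintegral_enorm_ne_top hF hF_sum

theorem integrable_tsum_of_summable_integral_norm [Countable ι] [CompleteSpace E]
    (hF : ∀ i, Integrable (F i) μ) (hF_sum : Summable fun i ↦ ∫ a, ‖F i a‖ ∂μ) :
    Integrable (fun a ↦ ∑' i, F i a) μ := by
  have h_ne_top : ∑' i, ‖(hF i).toL1 (F i)‖ₑ ≠ ∞ := by
    simpa only [Integrable.enorm_toL1] using tsum_lintegral_enorm_ne_top hF hF_sum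
  refine (L1.integrable_coeFn _).congr ((Lp.coeFn_tsum h_ne_top).trans ?_)
  filter_upwards [ae_all_iff.2 fun i ↦ (hF i).coeFn_toL1] with a ha
  exact tsum_congr ha

end SeriesOfIntegrable

section WeightedSeries

variable {Ω ι : Type*} [MeasurableSpace Ω] {P : Measure Ω} {w : ι → ℝ} {g : ι → Ω → ℝ} {C : ℝ}

theorem summable_integral_mul (hw : ∀ i, 0 ≤ w i) (hw_sum : Summable w)
    (hg : ∀ i ω, 0 ≤ g i ω) (hC : ∀ i, ∫ ω, g i ω ∂P ≤ C) :
    Summable fun i ↦ ∫ ω, w i * g i ω ∂P := by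
  refine .of_nonneg_of_le (fun i ↦ integral_nonneg fun ω ↦ mul_nonneg (hw i) (hg i ω))
    (fun i ↦ ?_) (hw_sum.mul_right C)
  rw [integral_const_mul]
  exact mul_le_mul_of_nonneg_left (hC i) (hw i)

theorem summable_integral_norm_mul (hw : ∀ i, 0 ≤ w i) (hw_sum : Summable w)
    (hg : ∀ i ω, 0 ≤ g i ω) (hC : ∀ i, ∫ ω, g i ω ∂P ≤ C) :
    Summable fun i ↦ ∫ ω, ‖w i * g i ω‖ ∂P :=
  (summable_integral_mul hw hw_sum hg hC).congr fun i ↦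
    integral_congr_ae (ae_of_all _ fun ω ↦ (norm_of_nonneg (mul_nonneg (hw i) (hg i ω))).symm)

theorem integral_tsum_mul_le [Countable ι] (hw : ∀ i, 0 ≤ w i) (hw_sum : Summable w)
    (hg : ∀ i ω, 0 ≤ g i ω) (hg_int : ∀ i, Integrable (g i) P) (hC : ∀ i, ∫ ω, g i ω ∂P ≤ C) :
    ∫ ω, ∑' i, w i * g i ω ∂P ≤ (∑' i, w i) * C := by
  rw [← integral_tsum_of_summable_integral_norm (fun i ↦ (hg_int i).const_mul (w i))
    (summable_integral_norm_mul hw hw_sum hg hC), ← tsum_mul_right]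
  refine Summable.tsum_le_tsum (fun i ↦ ?_) (summable_integral_mul hw hw_sum hg hC)
    (hw_sum.mul_right C)
  rw [integral_const_mul]
  exact mul_le_mul_of_nonneg_left (hC i) (hw i)

end WeightedSeries

theorem integrable_log_tsum_mul_exp_div_and_integral_abs_le {Ω ι : Type*} [MeasurableSpace Ω]
    {P : Measure Ω} [IsProbabilityMeasure P] [Countable ι] {w : ι → ℝ} {Y : ι → Ω → ℝ} {c r : ℝ}
    (hw : ∀ i, 0 ≤ w i) (hw_sum : Summable w) (hS : 0 < ∑' i, w i)
    (hY_exp : ∀ i, Integrable (fun ω ↦ exp (Y i ω)) P)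
    (hY_exp_le : ∀ i, ∫ ω, exp (Y i ω) ∂P ≤ exp c)
    (hY : ∀ i, Integrable (Y i) P) (hY_abs_le : ∀ i, ∫ ω, |Y i ω| ∂P ≤ r) :
    Integrable (fun ω ↦ log ((∑' i, w i * exp (Y i ω)) / ∑' i, w i)) P ∧
      ∫ ω, |log ((∑' i, w i * exp (Y i ω)) / ∑' i, w i)| ∂P ≤ c + 2 * r := by
  set S := ∑' i, w i
  have hF_int (i : ι) : Integrable (fun ω ↦ w i * exp (Y i ω)) P := (hY_exp i).const_mul _
  have hG_int (i : ι) : Integrable (fun ω ↦ w i * |Y i ω|) P := (hY i).abs.const_mul _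
  have hF_sum := summable_integral_norm_mul hw hw_sum (fun i ω ↦ (exp_pos (Y i ω)).le) hY_exp_le
  have hG_sum := summable_integral_norm_mul hw hw_sum (fun i ω ↦ abs_nonneg (Y i ω)) hY_abs_le
  have hZ_int := integrable_tsum_of_summable_integral_norm hF_int hF_sum
  have hA_int := integrable_tsum_of_summable_integral_norm hG_int hG_sum
  have hZ_le := integral_tsum_mul_le hw hw_sum (fun i ω ↦ (exp_pos (Y i ω)).le) hY_exp hY_exp_le
  have hA_le := integral_tsum_mul_le hw hw_sum (fun i ω ↦ abs_nonneg (Y i ω)) (fun i ↦ (hY i).abs)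
    hY_abs_le
  set D : Ω → ℝ := fun ω ↦ c - 1 + exp (-c) * ((∑' i, w i * exp (Y i ω)) / S) +
    2 * ((∑' i, w i * |Y i ω|) / S)
  have hD : Integrable D P := by fun_prop
  have h_bound : ∀ᵐ ω ∂P, |log ((∑' i, w i * exp (Y i ω)) / S)| ≤ D ω := by
    filter_upwards [ae_summable_norm_of_summable_integral_norm hF_int hF_sum,
      ae_summable_norm_of_summable_integral_norm hG_int hG_sum] with ω hF hG
    exact abs_log_tsum_mul_exp_div_le hw hw_sum hS hG.of_norm hF.of_norm c
  have h_log : Integrable (fun ω ↦ log ((∑' i, w i * exp (Y i ω)) / S)) P :=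
    hD.mono' (hZ_int.aemeasurable.div_const _).log.aestronglyMeasurable
      (by simpa only [norm_eq_abs] using h_bound)
  refine ⟨h_log, (integral_mono_ae h_log.abs hD h_bound).trans ?_⟩
  calc ∫ ω, D ω ∂P
      = c - 1 + exp (-c) * ((∫ ω, ∑' i, w i * exp (Y i ω) ∂P) / S) +
          2 * ((∫ ω, ∑' i, w i * |Y i ω| ∂P) / S) := by
        simp only [D]
        rw [integral_add (by fun_prop) (by fun_prop), integral_add (by fun_prop) (by fun_prop),
          integral_const, integral_const_mul, integral_const_mul, integral_div, integral_div,
          probReal_univ, one_smul]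
    _ ≤ c - 1 + exp (-c) * (S * exp c / S) + 2 * (S * r / S) := by gcongr
    _ = c + 2 * r := by
        rw [mul_div_cancel_left₀ _ hS.ne', mul_div_cancel_left₀ _ hS.ne', ← exp_add,
          neg_add_cancel, exp_zero]
        ring

section Gaussian

variable {Ω 𝓧 : Type*} [MeasurableSpace Ω] [MeasurableSpace 𝓧] {P : Measure Ω}

theorem ProbabilityTheory.HasLaw.integrable_comp {X : Ω → 𝓧} {μ : Measure 𝓧} {f : 𝓧 → ℝ}
    (hX : HasLaw X μ P) (hf : Integrable f μ) : Integrable (f ∘ X) P :=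
  (hX.map_eq ▸ hf).comp_aemeasurable hX.aemeasurable

theorem sq_integral_abs_le_integral_sq [IsProbabilityMeasure P] {X : Ω → ℝ} (hX : MemLp X 2 P) :
    (∫ ω, |X ω| ∂P) ^ 2 ≤ ∫ ω, X ω ^ 2 ∂P := by
  have h := variance_eq_sub hX.abs
  simp only [Pi.pow_apply, Pi.abs_apply, sq_abs] at h
  linarith [variance_nonneg |X| P]

theorem integral_abs_le_sqrt_of_hasLaw_gaussianReal {X : Ω → ℝ} {v : NNReal}
    (hX : HasLaw X (gaussianReal 0 v) P) : ∫ ω, |X ω| ∂P ≤ √v := by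
  have h_sq : ∫ x, x ^ 2 ∂gaussianReal 0 v = v := by
    rw [← variance_id_gaussianReal (μ := 0),
      variance_of_integral_eq_zero aemeasurable_id integral_id_gaussianReal]
    rfl
  rw [← Function.comp_def, hX.integral_comp continuous_abs.aestronglyMeasurable]
  refine (le_abs_self _).trans (abs_le_sqrt ?_)
  exact h_sq ▸ sq_integral_abs_le_integral_sq (memLp_id_gaussianReal 2)

end Gaussian

theorem stmt2_general {Ω : Type*} [MeasureSpace Ω] [IsProbabilityMeasure (ℙ : Measure Ω)]
    (β : ℝ) (hβ : 0 < β) (M : ℕ)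
    (ξ : ℕ → ℝ) (hξ : ∀ a, 0 ≤ ξ a) (hsum : Summable ξ) (hpos : 0 < ∑' a, ξ a)
    (q : ℕ → ℕ → ℝ) (hdiag : ∀ a, q a a = 1)
    (κ : ℕ → Ω → ℝ) (hκmeas : ∀ a, Measurable (κ a))
    (hκ : ∀ c : ℕ →₀ ℝ,
      Measure.map (fun ω => ∑ a ∈ c.support, c a * κ a ω) ℙ =
        gaussianReal 0
          (∑ a ∈ c.support, ∑ b ∈ c.support, c a * c b * ((q a b) ^ 2 / 2)).toNNReal) :
    Integrable (fun ω =>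
      Real.log ((∑' a, ξ a * Real.exp (β * Real.sqrt M * κ a ω)) / ∑' a, ξ a)) ∧
    ∫ ω, |Real.log ((∑' a, ξ a * Real.exp (β * Real.sqrt M * κ a ω)) / ∑' a, ξ a)|
      ≤ β ^ 2 * M / 4 + β * Real.sqrt (2 * M) := by
  set t := β * √M with ht_def
  have ht : 0 ≤ t := mul_nonneg hβ.le (sqrt_nonneg _)
  have hlaw (a : ℕ) : HasLaw (κ a) (gaussianReal 0 (2⁻¹ : ℝ).toNNReal) ℙ :=
    ⟨(hκmeas a).aemeasurable, by simpa [hdiag] using hκ (Finsupp.single a 1)⟩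
  have h_exp (a : ℕ) : ∫ ω, exp (t * κ a ω) = exp (t ^ 2 / 4) := by
    rw [← mgf, mgf_gaussianReal (hlaw a).map_eq, coe_toNNReal _ (by norm_num)]
    ring_nf
  have h_abs (a : ℕ) : ∫ ω, |t * κ a ω| ≤ t * √2⁻¹ := by
    simp_rw [abs_mul, abs_of_nonneg ht, integral_const_mul]
    gcongr
    simpa using integral_abs_le_sqrt_of_hasLaw_gaussianReal (hlaw a)
  obtain ⟨h_int, h_le⟩ := integrable_log_tsum_mul_exp_div_and_integral_abs_le hξ hsum hpos
    (fun a ↦ (hlaw a).integrable_comp (integrable_exp_mul_gaussianReal t)) (fun a ↦ (h_exp a).le)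
    (fun a ↦ ((hlaw a).integrable_comp ((memLp_id_gaussianReal 1).integrable le_rfl)).const_mul t)
    h_abs
  refine ⟨h_int, h_le.trans_eq ?_⟩
  rw [ht_def, mul_pow, sq_sqrt (Nat.cast_nonneg M), sqrt_mul zero_le_two, sqrt_inv]
  field_simp
  linear_combination -4 * √M * sq_sqrt (zero_le_two (α := ℝ))

/-- Integrability of the fugacity term of the ROSt functional: given ROSt data
`(ξ, q)` and centered jointly Gaussian `κ_α` with covariance `q_{α,α'}²/2`,
the random variable `ln((∑_α ξ_α e^{β√M κ_α})/(∑_α ξ_α))` is integrable and its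
expected absolute value is at most `β²M/4 + β√(2M)`. -/
theorem stmt2 {Ω : Type*} [MeasureSpace Ω] [IsProbabilityMeasure (ℙ : Measure Ω)]
    (β : ℝ) (hβ : 0 < β) (M : ℕ)
    (ξ : ℕ → ℝ) (hξ : ∀ a, 0 ≤ ξ a) (hsum : Summable ξ) (hpos : 0 < ∑' a, ξ a)
    (q : ℕ → ℕ → ℝ) (hdiag : ∀ a, q a a = 1)
    (hpsd : ∀ c : ℕ →₀ ℝ, 0 ≤ ∑ a ∈ c.support, ∑ b ∈ c.support, c a * c b * q a b)
    (κ : ℕ → Ω → ℝ) (hκmeas : ∀ a, Measurable (κ a))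
    (hκ : ∀ c : ℕ →₀ ℝ,
      Measure.map (fun ω => ∑ a ∈ c.support, c a * κ a ω) ℙ =
        gaussianReal 0
          (∑ a ∈ c.support, ∑ b ∈ c.support, c a * c b * ((q a b) ^ 2 / 2)).toNNReal) :
    Integrable (fun ω =>
      Real.log ((∑' a, ξ a * Real.exp (β * Real.sqrt M * κ a ω)) / ∑' a, ξ a)) ∧
    ∫ ω, |Real.log ((∑' a, ξ a * Real.exp (β * Real.sqrt M * κ a ω)) / ∑' a, ξ a)|
      ≤ β ^ 2 * M / 4 + β * Real.sqrt (2 * M) :=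
  stmt2_general β hβ M ξ hξ hsum hpos q hdiag κ hκmeas hκ
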